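/- For the quasi-Gaussian mixture P with k components, let m = (m_1,…,m_k) be the codebook of the component means and η = max_{1≤i≤k}(1 − N_i). Then the distortion satisfies R(m) ≤ σ² k θ_max d / (1 − η). -/

import Mathlib

/-! The distortion of the means is at most `∑ᵢ (θᵢ / Nᵢ) ∫ ‖x − mᵢ‖² gᵢ(x) dx`, where `gᵢ` is the
untruncated Gaussian density: bound `min_j ‖x − m_j‖²` by `‖x − mᵢ‖²` in the `i`-th component and
drop the truncation. Substituting `x = mᵢ + √Σᵢ v` turns each second moment into
`∫ vᵀ Σᵢ v φ(v) dv ≤ σ² ∫ ‖v‖² φ(v) dv = σ² d` for the standard Gaussian density `φ`, and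
`θᵢ / Nᵢ ≤ θ_max / (1 − η)` since `Nᵢ ≥ 1 − η`. -/

open MeasureTheory ProbabilityTheory Real Matrix Filter

noncomputable section

/-- The k-means contrast: `γ(c, x) = min_j ‖x − c_j‖²`. -/
def gammaF {d k : ℕ} (c : Fin k → EuclideanSpace ℝ (Fin d))
    (x : EuclideanSpace ℝ (Fin d)) : ℝ :=
  ⨅ j, ‖x - c j‖ ^ 2

/-- The distortion `R(c) = ∫ min_j ‖x − c_j‖² dP(x)`. -/
def distortion {d k : ℕ} (P : Measure (EuclideanSpace ℝ (Fin d)))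
    (c : Fin k → EuclideanSpace ℝ (Fin d)) : ℝ :=
  ∫ x, gammaF c x ∂P

/-- The constraint set `C^k`, where `C = ∏_p [−M_p, M_p]`. -/
def Ck {d : ℕ} (k : ℕ) (Mb : Fin d → ℝ) : Set (Fin k → EuclideanSpace ℝ (Fin d)) :=
  {c | ∀ j p, |c j p| ≤ Mb p}

/-- `‖c^{(p)}‖`, the Euclidean norm of the vector of p-th coordinates of the code points. -/
def coordNorm {d k : ℕ} (c : Fin k → EuclideanSpace ℝ (Fin d)) (p : Fin d) : ℝ :=
  Real.sqrt (∑ j, (c j p) ^ 2)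

/-- The penalty `I_w(c) = ∑_p w_p ‖c^{(p)}‖`. -/
def pen {d k : ℕ} (w : Fin d → ℝ) (c : Fin k → EuclideanSpace ℝ (Fin d)) : ℝ :=
  ∑ p, w p * coordNorm c p

/-- The support `S(c) = {p : c^{(p)} ≠ 0}`. -/
def supp {d k : ℕ} (c : Fin k → EuclideanSpace ℝ (Fin d)) : Set (Fin d) :=
  {p | ∃ j, c j p ≠ 0}

/-- Squared Euclidean distance `‖c − c'‖²` between codebooks, seen as kd-dimensional vectors. -/
def distsq {d k : ℕ} (c c' : Fin k → EuclideanSpace ℝ (Fin d)) : ℝ :=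
  ∑ j, ‖c j - c' j‖ ^ 2

/-- The empirical distortion `P_n γ(c, ·)` associated with the sample `X`. -/
def empRisk {d k n : ℕ} (X : Fin n → EuclideanSpace ℝ (Fin d))
    (c : Fin k → EuclideanSpace ℝ (Fin d)) : ℝ :=
  (1 : ℝ) / n * ∑ i, gammaF c (X i)

/-- The set `𝓜` of optimal codebooks (global minimizers of the distortion). -/
def optSet {d : ℕ} (P : Measure (EuclideanSpace ℝ (Fin d))) (k : ℕ) :
    Set (Fin k → EuclideanSpace ℝ (Fin d)) :=
  {cs | ∀ c : Fin k → EuclideanSpace ℝ (Fin d), distortion P cs ≤ distortion P c}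

/-- `‖w_{S(c)}‖² = ∑_{p ∈ S(c)} w_p²`. -/
def wnormsq {d k : ℕ} (w : Fin d → ℝ) (c : Fin k → EuclideanSpace ℝ (Fin d)) : ℝ :=
  ∑ p, (supp c).indicator (fun q => (w q) ^ 2) p

/-- (Untruncated) Gaussian density with mean `m` and covariance matrix `S`. -/
def gaussDensity {d : ℕ} (m : EuclideanSpace ℝ (Fin d))
    (S : Matrix (Fin d) (Fin d) ℝ) (x : EuclideanSpace ℝ (Fin d)) : ℝ :=
  (1 / ((2 * π) ^ ((d : ℝ) / 2) * Real.sqrt S.det)) *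
    Real.exp (-((fun i => x i - m i) ⬝ᵥ (S⁻¹ *ᵥ fun i => x i - m i)) / 2)

/-- Density of the quasi-Gaussian mixture, truncated to the ball `B(0, M)`;
`N i` is the normalization constant of the i-th truncated component. -/
def mixDensity {d k : ℕ} (θ N : Fin k → ℝ) (m : Fin k → EuclideanSpace ℝ (Fin d))
    (Cov : Fin k → Matrix (Fin d) (Fin d) ℝ) (M : ℝ) : EuclideanSpace ℝ (Fin d) → ℝ :=
  (Metric.closedBall (0 : EuclideanSpace ℝ (Fin d)) M).indicator
    (fun x => ∑ i, (θ i / N i) * gaussDensity (m i) (Cov i) x)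

open scoped ENNReal

lemma integral_exp_neg_sq_div_two : ∫ t : ℝ, exp (-t ^ 2 / 2) = √(2 * π) := by
  simpa [div_eq_inv_mul, neg_mul] using integral_gaussian (1 / 2)

lemma integral_sq_mul_exp_neg_sq_div_two : ∫ t : ℝ, t ^ 2 * exp (-t ^ 2 / 2) = √(2 * π) := by
  have h := variance_id_gaussianReal (μ := 0) (v := 1)
  rw [variance_eq_integral measurable_id.aemeasurable] at h
  simp only [id, integral_id_gaussianReal, sub_zero, NNReal.coe_one] at h
  rw [integral_gaussianReal_eq_integral_smul one_ne_zero, gaussianPDFReal_def] at h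
  simp only [sub_zero, NNReal.coe_one, mul_one, smul_eq_mul, mul_assoc, integral_const_mul] at h
  have h2pi : 0 < √(2 * π) := by positivity
  field_simp at h
  simpa [mul_comm, neg_div] using h

lemma integrable_exp_neg_sq_div_two : Integrable fun t : ℝ => exp (-t ^ 2 / 2) := by
  simpa [div_eq_inv_mul, neg_mul] using integrable_exp_neg_mul_sq (b := 1 / 2) (by norm_num)

lemma integrable_sq_mul_exp_neg_sq_div_two : Integrable fun t : ℝ => t ^ 2 * exp (-t ^ 2 / 2) := by
  simpa [div_eq_inv_mul, neg_mul, Real.rpow_two] using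
    integrable_rpow_mul_exp_neg_mul_sq (b := 1 / 2) (s := 2) (by norm_num) (by norm_num)

section StandardGaussian

variable {ι : Type*} [DecidableEq ι]

/-- Splits the `p`-th summand of `‖v‖² e^{-‖v‖²/2}` into one-dimensional factors, for Fubini. -/
def sqCoordGaussFactor (p q : ι) (t : ℝ) : ℝ :=
  (if q = p then t ^ 2 else 1) * exp (-t ^ 2 / 2)

lemma sqCoordGaussFactor_nonneg (p q : ι) (t : ℝ) : 0 ≤ sqCoordGaussFactor p q t := by
  unfold sqCoordGaussFactor
  split_ifs <;> positivity

lemma dotProduct_self_mul_exp_eq_sum_prod [Fintype ι] (v : ι → ℝ) :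
    (v ⬝ᵥ v) * exp (-(v ⬝ᵥ v) / 2) = ∑ p, ∏ q, sqCoordGaussFactor p q (v q) := by
  simp only [dotProduct, ← sq, sqCoordGaussFactor, Finset.prod_mul_distrib, Finset.prod_ite_eq',
    Finset.mem_univ, if_true, ← Real.exp_sum, ← Finset.sum_mul, Finset.sum_div,
    Finset.sum_neg_distrib, neg_div]

lemma integrable_sqCoordGaussFactor (p q : ι) : Integrable (sqCoordGaussFactor p q) := by
  by_cases h : q = p
  · unfold sqCoordGaussFactor
    simpa [h] using integrable_sq_mul_exp_neg_sq_div_two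
  · unfold sqCoordGaussFactor
    simpa [h] using integrable_exp_neg_sq_div_two

lemma integral_sqCoordGaussFactor (p q : ι) : ∫ t, sqCoordGaussFactor p q t = √(2 * π) := by
  by_cases h : q = p
  · simpa [sqCoordGaussFactor, h] using integral_sq_mul_exp_neg_sq_div_two
  · simpa [sqCoordGaussFactor, h] using integral_exp_neg_sq_div_two

lemma lintegral_dotProduct_self_mul_exp_neg_div_two [Fintype ι] :
    ∫⁻ v : ι → ℝ, ENNReal.ofReal ((v ⬝ᵥ v) * exp (-(v ⬝ᵥ v) / 2))
      = ENNReal.ofReal (Fintype.card ι * √(2 * π) ^ Fintype.card ι) := by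
  have hint : ∀ p, Integrable fun v : ι → ℝ => ∏ q, sqCoordGaussFactor p q (v q) := fun p =>
    Integrable.fintype_prod (f := sqCoordGaussFactor p) (integrable_sqCoordGaussFactor p)
  simp_rw [dotProduct_self_mul_exp_eq_sum_prod]
  rw [← ofReal_integral_eq_lintegral_ofReal (integrable_finsetSum _ fun p _ => hint p)
    (ae_of_all _ fun v => Finset.sum_nonneg fun p _ => Finset.prod_nonneg fun q _ =>
      sqCoordGaussFactor_nonneg p q (v q)), integral_finsetSum _ fun p _ => hint p]
  simp [volume_pi, integral_fintype_prod_eq_prod, integral_sqCoordGaussFactor]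

end StandardGaussian

lemma lintegral_comp_mulVec {ι : Type*} [Fintype ι] [DecidableEq ι] {A : Matrix ι ι ℝ}
    (hA : A.det ≠ 0) {g : (ι → ℝ) → ℝ≥0∞} (hg : Measurable g) :
    ENNReal.ofReal |A.det| * ∫⁻ v, g (A *ᵥ v) = ∫⁻ v, g v := by
  have hmap : Measure.map (toLin' A) volume = ENNReal.ofReal |A.det⁻¹| • volume := by
    simpa [LinearMap.det_toLin'] using
      Measure.map_linearMap_addHaar_eq_smul_addHaar volume (f := toLin' A) (by simpa)
  have hT : Measurable (toLin' A) := (toLin' A).continuous_of_finiteDimensional.measurable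
  rw [show (fun v => g (A *ᵥ v)) = fun v => g (toLin' A v) from rfl, ← lintegral_map hg hT, hmap,
    lintegral_smul_measure, smul_eq_mul, ← mul_assoc, ← ENNReal.ofReal_mul (abs_nonneg _),
    abs_inv, mul_inv_cancel₀ (abs_ne_zero.mpr hA), ENNReal.ofReal_one, one_mul]

namespace Matrix

open scoped MatrixOrder

variable {n : Type*} [Fintype n] [DecidableEq n] {S : Matrix n n ℝ}

lemma transpose_sqrt : (CFC.sqrt S)ᵀ = CFC.sqrt S := by
  simpa [IsHermitian, conjTranspose_eq_transpose_of_trivial] using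
    (CFC.sqrt_nonneg S).posSemidef.isHermitian

lemma PosSemidef.sqrt_mulVec_dotProduct_sqrt_mulVec (hS : S.PosSemidef) (w : n → ℝ) :
    (CFC.sqrt S *ᵥ w) ⬝ᵥ (CFC.sqrt S *ᵥ w) = w ⬝ᵥ (S *ᵥ w) := by
  rw [dotProduct_mulVec, ← mulVec_transpose, transpose_sqrt, mulVec_mulVec,
    CFC.sqrt_mul_sqrt_self S hS.nonneg, dotProduct_comm]

lemma PosDef.sqrt_mulVec_dotProduct_inv_mulVec_sqrt_mulVec (hS : S.PosDef) (w : n → ℝ) :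
    (CFC.sqrt S *ᵥ w) ⬝ᵥ (S⁻¹ *ᵥ (CFC.sqrt S *ᵥ w)) = w ⬝ᵥ w := by
  have hA : IsUnit (CFC.sqrt S).det := by
    rw [hS.posSemidef.det_sqrt, RCLike.sqrt_real]
    exact (Real.sqrt_pos.mpr hS.det_pos).ne'.isUnit
  have hSinv : CFC.sqrt S * (S⁻¹ * CFC.sqrt S) = 1 := by
    rw [← congrArg Inv.inv (CFC.sqrt_mul_sqrt_self S hS.posSemidef.nonneg), mul_inv_rev,
      mul_assoc, mul_nonsing_inv_cancel_left _ _ hA, nonsing_inv_mul _ hA]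
  rw [mulVec_mulVec, dotProduct_comm, dotProduct_mulVec, ← mulVec_transpose, transpose_sqrt,
    mulVec_mulVec, hSinv, one_mulVec, dotProduct_comm]

lemma PosSemidef.det_sqrt_eq_sqrt_det (hS : S.PosSemidef) : (CFC.sqrt S).det = √S.det := by
  rw [hS.det_sqrt, RCLike.sqrt_real]

end Matrix

section GaussDensity

variable {d : ℕ}

lemma gaussDensity_nonneg (m : EuclideanSpace ℝ (Fin d)) (S : Matrix (Fin d) (Fin d) ℝ)
    (x : EuclideanSpace ℝ (Fin d)) : 0 ≤ gaussDensity m S x := by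
  unfold gaussDensity
  positivity

lemma continuous_gaussDensity (m : EuclideanSpace ℝ (Fin d)) (S : Matrix (Fin d) (Fin d) ℝ) :
    Continuous (gaussDensity m S) := by
  unfold gaussDensity
  fun_prop

lemma gaussDensity_add_right (m : EuclideanSpace ℝ (Fin d)) (S : Matrix (Fin d) (Fin d) ℝ)
    (x : EuclideanSpace ℝ (Fin d)) : gaussDensity m S (x + m) = gaussDensity 0 S x := by
  simp [gaussDensity]

open scoped MatrixOrder in
lemma gaussDensity_zero_sqrt_mulVec {S : Matrix (Fin d) (Fin d) ℝ} (hS : S.PosDef)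
    (w : Fin d → ℝ) :
    gaussDensity 0 S (WithLp.toLp 2 (CFC.sqrt S *ᵥ w))
      = 1 / ((2 * π) ^ ((d : ℝ) / 2) * √S.det) * exp (-(w ⬝ᵥ w) / 2) := by
  simp only [gaussDensity, PiLp.zero_apply, sub_zero,
    hS.sqrt_mulVec_dotProduct_inv_mulVec_sqrt_mulVec]

lemma lintegral_sq_norm_sub_mul_gaussDensity_eq (m : EuclideanSpace ℝ (Fin d))
    (S : Matrix (Fin d) (Fin d) ℝ) :
    ∫⁻ x, ENNReal.ofReal (‖x - m‖ ^ 2 * gaussDensity m S x)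
      = ∫⁻ v : Fin d → ℝ, ENNReal.ofReal ((v ⬝ᵥ v) * gaussDensity 0 S (WithLp.toLp 2 v)) := by
  rw [← lintegral_add_right_eq_self _ m, ← (PiLp.volume_preserving_toLp (Fin d)).lintegral_comp_emb
    (MeasurableEquiv.toLp 2 (Fin d → ℝ)).measurableEmbedding]
  simp only [add_sub_cancel_right, gaussDensity_add_right, EuclideanSpace.real_norm_sq_eq,
    dotProduct, ← sq]

end GaussDensity

open scoped MatrixOrder in
lemma sqrt_mulVec_dotProduct_mul_gaussDensity_le {d : ℕ} {S : Matrix (Fin d) (Fin d) ℝ}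
    (hS : S.PosDef) {σ : ℝ} (hup : ∀ v : Fin d → ℝ, v ⬝ᵥ (S *ᵥ v) ≤ σ ^ 2 * (v ⬝ᵥ v))
    (w : Fin d → ℝ) :
    (CFC.sqrt S *ᵥ w) ⬝ᵥ (CFC.sqrt S *ᵥ w) * gaussDensity 0 S (WithLp.toLp 2 (CFC.sqrt S *ᵥ w))
      ≤ σ ^ 2 * (1 / ((2 * π) ^ ((d : ℝ) / 2) * √S.det)) * ((w ⬝ᵥ w) * exp (-(w ⬝ᵥ w) / 2)) := by
  rw [hS.posSemidef.sqrt_mulVec_dotProduct_sqrt_mulVec, gaussDensity_zero_sqrt_mulVec hS]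
  calc w ⬝ᵥ (S *ᵥ w) * (1 / ((2 * π) ^ ((d : ℝ) / 2) * √S.det) * exp (-(w ⬝ᵥ w) / 2))
      ≤ σ ^ 2 * (w ⬝ᵥ w) * (1 / ((2 * π) ^ ((d : ℝ) / 2) * √S.det) * exp (-(w ⬝ᵥ w) / 2)) := by
        gcongr
        exact hup w
    _ = _ := by ring

open scoped MatrixOrder in
lemma lintegral_sq_norm_sub_mul_gaussDensity_le {d : ℕ} (m : EuclideanSpace ℝ (Fin d))
    {S : Matrix (Fin d) (Fin d) ℝ} (hS : S.PosDef) {σ : ℝ}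
    (hup : ∀ v : Fin d → ℝ, v ⬝ᵥ (S *ᵥ v) ≤ σ ^ 2 * (v ⬝ᵥ v)) :
    ∫⁻ x, ENNReal.ofReal (‖x - m‖ ^ 2 * gaussDensity m S x) ≤ ENNReal.ofReal (σ ^ 2 * d) := by
  set A := CFC.sqrt S
  set c : ℝ := 1 / ((2 * π) ^ ((d : ℝ) / 2) * √S.det)
  have hdetA : A.det = √S.det := hS.posSemidef.det_sqrt_eq_sqrt_det
  have hdet : 0 < √S.det := Real.sqrt_pos.mpr hS.det_pos
  have hmeas : Measurable fun v : Fin d → ℝ =>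
      ENNReal.ofReal ((v ⬝ᵥ v) * gaussDensity 0 S (WithLp.toLp 2 v)) := by
    have := continuous_gaussDensity (0 : EuclideanSpace ℝ (Fin d)) S
    fun_prop
  have hsqrt : √(2 * π) ^ d = (2 * π) ^ ((d : ℝ) / 2) := by
    rw [Real.sqrt_eq_rpow, ← Real.rpow_natCast, ← Real.rpow_mul (by positivity)]
    ring_nf
  calc ∫⁻ x, ENNReal.ofReal (‖x - m‖ ^ 2 * gaussDensity m S x)
      = ENNReal.ofReal |A.det| * ∫⁻ w, ENNReal.ofReal ((A *ᵥ w) ⬝ᵥ (A *ᵥ w)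
          * gaussDensity 0 S (WithLp.toLp 2 (A *ᵥ w))) := by
        rw [lintegral_sq_norm_sub_mul_gaussDensity_eq,
          lintegral_comp_mulVec (hdetA ▸ hdet.ne') hmeas]
    _ ≤ ENNReal.ofReal |A.det| * (ENNReal.ofReal (σ ^ 2 * c)
          * ENNReal.ofReal (d * √(2 * π) ^ d)) := by
        have hstd := lintegral_dotProduct_self_mul_exp_neg_div_two (ι := Fin d)
        rw [Fintype.card_fin] at hstd
        rw [← hstd, ← lintegral_const_mul (ENNReal.ofReal (σ ^ 2 * c)) (by fun_prop)]
        gcongr with w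
        rw [← ENNReal.ofReal_mul (by positivity)]
        exact ENNReal.ofReal_le_ofReal (sqrt_mulVec_dotProduct_mul_gaussDensity_le hS hup w)
    _ = ENNReal.ofReal (σ ^ 2 * d) := by
        rw [← ENNReal.ofReal_mul (by positivity), ← ENNReal.ofReal_mul (abs_nonneg _), hdetA,
          abs_of_pos hdet, hsqrt]
        congr 1
        simp only [c]
        field_simp

section Distortion

variable {d k : ℕ}

lemma gammaF_nonneg (c : Fin k → EuclideanSpace ℝ (Fin d)) (x : EuclideanSpace ℝ (Fin d)) :
    0 ≤ gammaF c x :=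
  Real.iInf_nonneg fun _ => sq_nonneg _

lemma gammaF_le (c : Fin k → EuclideanSpace ℝ (Fin d)) (x : EuclideanSpace ℝ (Fin d))
    (i : Fin k) : gammaF c x ≤ ‖x - c i‖ ^ 2 :=
  ciInf_le (Set.finite_range _).bddBelow i

lemma mul_gammaF_le_sum {a : ℝ} {w b : Fin k → ℝ} (hw : ∀ i, 0 ≤ w i) (hb : ∀ i, 0 ≤ b i)
    (hab : a ≤ ∑ i, w i * b i) (c : Fin k → EuclideanSpace ℝ (Fin d))
    (x : EuclideanSpace ℝ (Fin d)) : a * gammaF c x ≤ ∑ i, w i * (‖x - c i‖ ^ 2 * b i) :=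
  calc a * gammaF c x ≤ (∑ i, w i * b i) * gammaF c x :=
        mul_le_mul_of_nonneg_right hab (gammaF_nonneg c x)
    _ = ∑ i, w i * (gammaF c x * b i) := by
        rw [Finset.sum_mul]
        exact Finset.sum_congr rfl fun i _ => by ring
    _ ≤ ∑ i, w i * (‖x - c i‖ ^ 2 * b i) := Finset.sum_le_sum fun i _ =>
        mul_le_mul_of_nonneg_left (mul_le_mul_of_nonneg_right (gammaF_le c x i) (hb i)) (hw i)

lemma distortion_le_of_lintegral_le {μ : Measure (EuclideanSpace ℝ (Fin d))}
    (c : Fin k → EuclideanSpace ℝ (Fin d)) {B : ℝ} (hB0 : 0 ≤ B)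
    (hB : ∫⁻ x, ENNReal.ofReal (gammaF c x) ∂μ ≤ ENNReal.ofReal B) : distortion μ c ≤ B :=
  calc distortion μ c ≤ ‖distortion μ c‖ := Real.le_norm_self _
    _ ≤ (∫⁻ x, ENNReal.ofReal ‖gammaF c x‖ ∂μ).toReal := norm_integral_le_lintegral_norm _
    _ ≤ B := by
        simp only [Real.norm_of_nonneg (gammaF_nonneg c _)]
        exact ENNReal.toReal_le_of_le_ofReal hB0 hB

lemma distortion_withDensity_le {μ : Measure (EuclideanSpace ℝ (Fin d))}
    {f : EuclideanSpace ℝ (Fin d) → ℝ} (hf : Measurable f) {w : Fin k → ℝ} (hw : ∀ i, 0 ≤ w i)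
    {g : Fin k → EuclideanSpace ℝ (Fin d) → ℝ} (hg : ∀ i, Measurable (g i))
    (hg0 : ∀ i x, 0 ≤ g i x) (hfg : ∀ x, f x ≤ ∑ i, w i * g i x)
    (c : Fin k → EuclideanSpace ℝ (Fin d)) {B : ℝ} (hB0 : 0 ≤ B)
    (hB : ∀ i, ∫⁻ x, ENNReal.ofReal (‖x - c i‖ ^ 2 * g i x) ∂μ ≤ ENNReal.ofReal B) :
    distortion (μ.withDensity fun x => ENNReal.ofReal (f x)) c ≤ (∑ i, w i) * B := by
  have hpt : ∀ x, ENNReal.ofReal (f x) * ENNReal.ofReal (gammaF c x)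
      ≤ ∑ i, ENNReal.ofReal (w i) * ENNReal.ofReal (‖x - c i‖ ^ 2 * g i x) := by
    intro x
    rw [← ENNReal.ofReal_mul' (gammaF_nonneg c x), ← Finset.sum_congr rfl fun i _ =>
      ENNReal.ofReal_mul (hw i), ← ENNReal.ofReal_sum_of_nonneg fun i _ =>
        mul_nonneg (hw i) (mul_nonneg (sq_nonneg _) (hg0 i x))]
    exact ENNReal.ofReal_le_ofReal (mul_gammaF_le_sum hw (hg0 · x) (hfg x) c x)
  have hmeas : ∀ i, Measurable fun x => ENNReal.ofReal (‖x - c i‖ ^ 2 * g i x) := fun i => by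
    have := hg i
    fun_prop
  refine distortion_le_of_lintegral_le c (mul_nonneg (Finset.sum_nonneg fun i _ => hw i) hB0) ?_
  calc _ ≤ ∫⁻ x, ENNReal.ofReal (f x) * ENNReal.ofReal (gammaF c x) ∂μ :=
        lintegral_withDensity_le_lintegral_mul μ hf.ennreal_ofReal _
    _ ≤ ∫⁻ x, ∑ i, ENNReal.ofReal (w i) * ENNReal.ofReal (‖x - c i‖ ^ 2 * g i x) ∂μ :=
        lintegral_mono hpt
    _ = ∑ i, ENNReal.ofReal (w i) * ∫⁻ x, ENNReal.ofReal (‖x - c i‖ ^ 2 * g i x) ∂μ := by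
        rw [lintegral_finsetSum _ fun i _ => (hmeas i).const_mul _]
        exact Finset.sum_congr rfl fun i _ => lintegral_const_mul _ (hmeas i)
    _ ≤ ∑ i, ENNReal.ofReal (w i) * ENNReal.ofReal B := by gcongr with i; exact hB i
    _ = ENNReal.ofReal ((∑ i, w i) * B) := by
        rw [← Finset.sum_mul, ← ENNReal.ofReal_sum_of_nonneg fun i _ => hw i,
          ← ENNReal.ofReal_mul (Finset.sum_nonneg fun i _ => hw i)]

end Distortion

section Mixture

variable {d k : ℕ} (θ N : Fin k → ℝ) (m : Fin k → EuclideanSpace ℝ (Fin d))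
  (Cov : Fin k → Matrix (Fin d) (Fin d) ℝ) (M : ℝ)

lemma measurable_mixDensity : Measurable (mixDensity θ N m Cov M) :=
  (Finset.measurable_sum _ fun i _ =>
    ((continuous_gaussDensity (m i) (Cov i)).measurable.const_mul _)).indicator
    measurableSet_closedBall

lemma mixDensity_le_sum {θ N} (hw : ∀ i, 0 ≤ θ i / N i) (x : EuclideanSpace ℝ (Fin d)) :
    mixDensity θ N m Cov M x ≤ ∑ i, θ i / N i * gaussDensity (m i) (Cov i) x :=
  Set.indicator_le_self' (fun y _ => Finset.sum_nonneg fun i _ =>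
    mul_nonneg (hw i) (gaussDensity_nonneg _ _ y)) x

end Mixture

theorem quasi_gaussian_means_risk_general
    (d k : ℕ)
    -- mixture weights and distinct means
    (θ : Fin k → ℝ) (hθpos : ∀ i, 0 < θ i)
    (m : Fin k → EuclideanSpace ℝ (Fin d))
    (M : ℝ)
    -- covariances with largest eigenvalue at most `σ²`
    (σ : ℝ)
    (Cov : Fin k → Matrix (Fin d) (Fin d) ℝ) (hpd : ∀ i, (Cov i).PosDef)
    (hup : ∀ i (v : Fin d → ℝ), v ⬝ᵥ (Cov i *ᵥ v) ≤ σ ^ 2 * (v ⬝ᵥ v))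
    -- normalization constants and `η = max_i (1 − N_i)`
    (N : Fin k → ℝ)
    (η : ℝ) (hη : η = ⨆ i, (1 - N i)) (hηlt : η < 1)
    -- `θ_max = max_i θ_i`
    (θmax : ℝ) (hθmax : θmax = ⨆ i, θ i)
    -- the quasi-Gaussian mixture `P`
    (P : Measure (EuclideanSpace ℝ (Fin d)))
    (hP : P = volume.withDensity (fun x => ENNReal.ofReal (mixDensity θ N m Cov M x))) :
    distortion P m ≤ σ ^ 2 * k * θmax * d / (1 - η) := by
  have hη1 : 0 < 1 - η := by linarith
  have hNlb : ∀ i, 1 - η ≤ N i := fun i => by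
    have := hη ▸ le_ciSup (Set.finite_range fun i => 1 - N i).bddAbove i
    linarith
  have hθle : ∀ i, θ i ≤ θmax := fun i => hθmax ▸ le_ciSup (Set.finite_range θ).bddAbove i
  have hw : ∀ i, 0 ≤ θ i / N i := fun i => div_nonneg (hθpos i).le (hη1.trans_le (hNlb i)).le
  have hwsum : ∑ i, θ i / N i ≤ k * (θmax / (1 - η)) :=
    calc ∑ i, θ i / N i ≤ ∑ _i : Fin k, θmax / (1 - η) := Finset.sum_le_sum fun i _ =>
          div_le_div₀ ((hθpos i).le.trans (hθle i)) (hθle i) hη1 (hNlb i)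
      _ = k * (θmax / (1 - η)) := by simp
  subst hP
  calc distortion _ m ≤ (∑ i, θ i / N i) * (σ ^ 2 * d) :=
        distortion_withDensity_le (measurable_mixDensity θ N m Cov M) hw
          (fun i => (continuous_gaussDensity (m i) (Cov i)).measurable)
          (fun i => gaussDensity_nonneg (m i) (Cov i)) (mixDensity_le_sum m Cov M hw) m
          (by positivity) fun i => lintegral_sq_norm_sub_mul_gaussDensity_le (m i) (hpd i) (hup i)
    _ ≤ k * (θmax / (1 - η)) * (σ ^ 2 * d) := by gcongr
    _ = σ ^ 2 * k * θmax * d / (1 - η) := by ring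

/-- inequality `meansrisk` of Lemma `Gaussiancalculus`: for the
quasi-Gaussian mixture, `R(m) ≤ σ² k θ_max d / (1 − η)`. -/
theorem quasi_gaussian_means_risk
    (d k : ℕ) (hd : 0 < d) (hk : 0 < k)
    -- mixture weights and distinct means
    (θ : Fin k → ℝ) (hθpos : ∀ i, 0 < θ i) (hθsum : ∑ i, θ i = 1)
    (m : Fin k → EuclideanSpace ℝ (Fin d)) (hmdist : ∀ i j, i ≠ j → m i ≠ m j)
    (M : ℝ) (hM : ∀ j, 2 * ‖m j‖ ≤ M)
    -- covariances with largest eigenvalue at most `σ²`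
    (σ : ℝ) (hσ : 0 < σ)
    (Cov : Fin k → Matrix (Fin d) (Fin d) ℝ) (hpd : ∀ i, (Cov i).PosDef)
    (hup : ∀ i (v : Fin d → ℝ), v ⬝ᵥ (Cov i *ᵥ v) ≤ σ ^ 2 * (v ⬝ᵥ v))
    -- normalization constants and `η = max_i (1 − N_i)`
    (N : Fin k → ℝ) (hNpos : ∀ i, 0 < N i)
    (hN : ∀ i, N i = ∫ x in Metric.closedBall (0 : EuclideanSpace ℝ (Fin d)) M,
      gaussDensity (m i) (Cov i) x)
    (η : ℝ) (hη : η = ⨆ i, (1 - N i)) (hηlt : η < 1)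
    -- `θ_max = max_i θ_i`
    (θmax : ℝ) (hθmax : θmax = ⨆ i, θ i)
    -- the quasi-Gaussian mixture `P`
    (P : Measure (EuclideanSpace ℝ (Fin d))) [IsProbabilityMeasure P]
    (hP : P = volume.withDensity (fun x => ENNReal.ofReal (mixDensity θ N m Cov M x))) :
    distortion P m ≤ σ ^ 2 * k * θmax * d / (1 - η) :=
  quasi_gaussian_means_risk_general d k θ hθpos m M σ Cov hpd hup N η hη hηlt θmax hθmax P hP

end
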